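/- Let Φ_ν(x) = F(x) + (ν/2)‖A x - b‖² where F is continuous and coercive, and let x_ν be a minimizer of Φ_ν. Then any limit point of (x_ν) as ν → ∞ is a minimizer of F over the set {x : Ax = b}, provided that set is nonempty. -/

import Mathlib

open Filter Topology

theorem penalty_limit_point {m n : ℕ} (F : EuclideanSpace ℝ (Fin n) → ℝ)
    (hF : Continuous F) (hcoer : Tendsto F (cocompact _) atTop)
    (A : Matrix (Fin m) (Fin n) ℝ) (b : Fin m → ℝ)
    (hfeas : ∃ x : EuclideanSpace ℝ (Fin n), A.mulVec x = b)
    (xν : ℝ → EuclideanSpace ℝ (Fin n))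
    (hmin : ∀ ν : ℝ,
      IsMinOn (fun x : EuclideanSpace ℝ (Fin n) =>
        F x + ν / 2 * ∑ i, (A.mulVec x i - b i) ^ 2) Set.univ (xν ν)) :
    ∀ xstar : EuclideanSpace ℝ (Fin n), MapClusterPt xstar atTop xν →
      A.mulVec xstar = b ∧
        ∀ y : EuclideanSpace ℝ (Fin n), A.mulVec y = b → F xstar ≤ F y := by
  intro xstar hcl
  set P : EuclideanSpace ℝ (Fin n) → ℝ := fun x => ∑ i, (A.mulVec x i - b i) ^ 2 with hP
  have hPcont : Continuous P := by
    apply continuous_finset_sum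
    intro i _
    have : Continuous fun x : EuclideanSpace ℝ (Fin n) => A.mulVec x i := by
      simp only [Matrix.mulVec, dotProduct]
      exact continuous_finset_sum _ fun j _ =>
        continuous_const.mul (EuclideanSpace.proj j).continuous
    exact (this.sub continuous_const).pow 2
  have hPnonneg : ∀ x, 0 ≤ P x := fun x =>
    Finset.sum_nonneg fun i _ => sq_nonneg _
  have hPzero : ∀ y : EuclideanSpace ℝ (Fin n), A.mulVec y = b → P y = 0 := by
    intro y hy; simp [hP, hy]
  -- the filter along which ν → ∞ and xν ν → xstar
  set L : Filter ℝ := atTop ⊓ comap xν (𝓝 xstar) with hL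
  have hLne : L.NeBot := by
    have h1 : NeBot (map xν atTop ⊓ 𝓝 xstar) := by
      have := hcl
      rw [MapClusterPt, ClusterPt] at this
      rwa [inf_comm]
    have h2 : map xν L = map xν atTop ⊓ 𝓝 xstar := Filter.push_pull xν atTop (𝓝 xstar)
    rw [← h2] at h1
    exact map_neBot_iff xν |>.mp h1
  have htend : Tendsto xν L (𝓝 xstar) := tendsto_comap.mono_left inf_le_right
  have hnu : Tendsto (fun ν : ℝ => ν) L atTop := tendsto_id.mono_left inf_le_left
  have hFt : Tendsto (fun ν => F (xν ν)) L (𝓝 (F xstar)) := (hF.tendsto xstar).comp htend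
  have hPt : Tendsto (fun ν => P (xν ν)) L (𝓝 (P xstar)) := (hPcont.tendsto xstar).comp htend
  obtain ⟨xb, hxb⟩ := hfeas
  have key : ∀ (ν : ℝ) (y' : EuclideanSpace ℝ (Fin n)), A.mulVec y' = b →
      F (xν ν) + ν / 2 * P (xν ν) ≤ F y' := by
    intro ν y' hy'
    have h2 := hmin ν (Set.mem_univ y')
    simp only [Set.mem_setOf_eq] at h2
    have h0 : (∑ i, (A.mulVec y' i - b i) ^ 2) = 0 := by simp [hy']
    rw [h0, mul_zero, add_zero] at h2
    exact h2
  have keyb : ∀ ν : ℝ, F (xν ν) + ν / 2 * P (xν ν) ≤ F xb := fun ν => key ν xb hxb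
  -- P xstar = 0
  have hPstar : P xstar = 0 := by
    by_contra hne
    have hpos : 0 < P xstar := lt_of_le_of_ne (hPnonneg xstar) (Ne.symm hne)
    have hhalf : Tendsto (fun ν : ℝ => ν / 2) L atTop := hnu.atTop_div_const two_pos
    have hmul : Tendsto (fun ν : ℝ => ν / 2 * P (xν ν)) L atTop :=
      hhalf.atTop_mul_pos hpos hPt
    have hsum : Tendsto (fun ν : ℝ => F (xν ν) + ν / 2 * P (xν ν)) L atTop :=
      hFt.add_atTop hmul
    have hgt := hsum.eventually_gt_atTop (F xb)
    rcases (hgt.and (Eventually.of_forall keyb)).exists with ⟨ν, h1, h2⟩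
    exact absurd h2 (not_le.mpr h1)
  have hmv : A.mulVec xstar = b := by
    funext i
    have := (Finset.sum_eq_zero_iff_of_nonneg (fun i _ => sq_nonneg
      (A.mulVec xstar i - b i))).mp hPstar i (Finset.mem_univ i)
    have := sq_eq_zero_iff.mp this
    linarith
  refine ⟨hmv, fun y hy => ?_⟩
  have hev : ∀ᶠ ν : ℝ in L, F (xν ν) ≤ F y := by
    filter_upwards [hnu.eventually_ge_atTop 0] with ν hν0
    have h1 : F (xν ν) + ν / 2 * P (xν ν) ≤ F y := key ν y hy
    nlinarith [hPnonneg (xν ν)]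
  exact le_of_tendsto hFt hev
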